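/- Let C be a permutation-invariant partition of the player set of a finite normal-form game with identical interests, and let q^c : [0,∞) → Δ^n be a solution of the joint CT-ECFP differential inclusion q̇ ∈ BR(q̄) − q. Then for any nondegenerate interval T ⊆ [0,∞), the function v(t) = (1/n) ∑_{i=1}^n U(q^c_i(t), q̄^c_{-i}(t)) is constant on T if and only if q^c(t) ∈ MCE for every t ∈ T. -/

import Mathlib

open MeasureTheory Filter Topology

noncomputable section

namespace ECFP

variable {ι A κ : Type*}

/-- The mixed-strategy simplex over a finite action set `Y` inside the action universe `A`. -/
def simplex (Y : Finset A) : Set (A → ℝ) :=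
  {p | (∀ a, 0 ≤ p a) ∧ (∀ a, a ∉ Y → p a = 0) ∧ ∑ a ∈ Y, p a = 1}

/-- The space `Δⁿ` of joint mixed strategies. -/
def Delta (Y : ι → Finset A) : Set (ι → A → ℝ) :=
  {p | ∀ i, p i ∈ simplex (Y i)}

variable [Fintype ι] [DecidableEq ι] [Fintype A] [DecidableEq κ]

/-- The mixed extension of the common utility `u`:
`U(p₁,…,pₙ) = ∑_y u(y) p₁(y₁)⋯pₙ(yₙ)`. -/
def U (u : (ι → A) → ℝ) (p : ι → A → ℝ) : ℝ :=
  ∑ y : ι → A, u y * ∏ i, p i (y i)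

/-- The `ε`-best-response set of player `i` against the joint strategy `p`
(only the components `p_{-i}` matter, since player `i`'s component is overwritten):
`{pᵢ ∈ Δᵢ : U(pᵢ,p_{-i}) ≥ U(qᵢ,p_{-i}) - ε  ∀ qᵢ ∈ Δᵢ}`. -/
def BRi (Y : ι → Finset A) (u : (ι → A) → ℝ) (ε : ℝ) (p : ι → A → ℝ) (i : ι) :
    Set (A → ℝ) :=
  {pi | pi ∈ simplex (Y i) ∧
    ∀ qi ∈ simplex (Y i),
      U u (Function.update p i pi) ≥ U u (Function.update p i qi) - ε}

/-- The joint `ε`-best-response set `BR^ε(p) = (BR₁^ε(p_{-1}),…,BRₙ^ε(p_{-n}))`. -/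
def BR (Y : ι → Finset A) (u : (ι → A) → ℝ) (ε : ℝ) (p : ι → A → ℝ) :
    Set (ι → A → ℝ) :=
  {b | ∀ i, b i ∈ BRi Y u ε p i}

/-- The profile obtained from `y` by swapping the strategies of players `i` and `j`. -/
def swapStrat (y : ι → A) (i j : ι) : ι → A :=
  Function.update (Function.update y i (y j)) j (y i)

/-- `cls : ι → κ` encodes a permutation-invariant partition of the player set (the classes
are the fibers of `cls`): players in the same class have the same action set, and the utility
is invariant under swapping the strategies of two same-class players in any strategy profile. -/
def PermInvariant (Y : ι → Finset A) (u : (ι → A) → ℝ) (cls : ι → κ) : Prop :=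
  ∀ i j : ι, cls i = cls j →
    Y i = Y j ∧ ∀ y : ι → A, (∀ k, y k ∈ Y k) → u (swapStrat y i j) = u y

/-- The equivalence class (as a finset of players) of player `i`. -/
def cluster (cls : ι → κ) (i : ι) : Finset ι :=
  Finset.univ.filter (fun j => cls j = cls i)

/-- The centroid distribution `p̄`: player `i` is assigned the average of the strategies of
the players in `i`'s class. -/
def centroid (cls : ι → κ) (p : ι → A → ℝ) : ι → A → ℝ :=
  fun i => ((cluster cls i).card : ℝ)⁻¹ • ∑ j ∈ cluster cls i, p j

/-- A joint strategy is class-constant if same-class players use identical strategies. -/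
def classConst (cls : ι → κ) (p : ι → A → ℝ) : Prop :=
  ∀ i j, cls i = cls j → p i = p j

/-- The set of Nash equilibria. -/
def NE (Y : ι → Finset A) (u : (ι → A) → ℝ) : Set (ι → A → ℝ) :=
  {p | p ∈ Delta Y ∧ ∀ i, ∀ qi ∈ simplex (Y i),
    U u (Function.update p i qi) ≤ U u p}

/-- The set of symmetric Nash equilibria relative to the partition `cls`. -/
def SNE (Y : ι → Finset A) (u : (ι → A) → ℝ) (cls : ι → κ) : Set (ι → A → ℝ) :=
  {p | p ∈ NE Y u ∧ classConst cls p}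

/-- The set of mean-centric equilibria relative to the partition `cls`:
`U(pᵢ, p̄_{-i}) ≥ U(pᵢ', p̄_{-i})` for all `pᵢ' ∈ Δᵢ` and all `i`. -/
def MCE (Y : ι → Finset A) (u : (ι → A) → ℝ) (cls : ι → κ) : Set (ι → A → ℝ) :=
  {p | p ∈ Delta Y ∧ ∀ i, ∀ qi ∈ simplex (Y i),
    U u (Function.update (centroid cls p) i qi)
      ≤ U u (Function.update (centroid cls p) i (p i))}

/-- `V(p) = (1/n) ∑ᵢ U(pᵢ, p̄_{-i})`. -/
def Vfun (u : (ι → A) → ℝ) (cls : ι → κ) (p : ι → A → ℝ) : ℝ :=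
  (Fintype.card ι : ℝ)⁻¹ * ∑ i, U u (Function.update (centroid cls p) i (p i))

/-- A discrete-time ECFP process w.r.t. `(Γ, 𝒞)`: `q(1) = a(1)`,
`q(t+1) = q(t) + γₜ (a(t+1) − q(t))` and `a(t+1) ∈ BR^{εₜ}(q̄(t))` for all `t`
(time is indexed by `ℕ`, i.e. `t = 0` plays the role of `t = 1` in the paper). -/
structure IsECFP (Y : ι → Finset A) (u : (ι → A) → ℝ) (cls : ι → κ)
    (γ ε : ℕ → ℝ) (a q : ℕ → ι → A → ℝ) : Prop where
  a_init_mem : a 0 ∈ Delta Y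
  q_mem : ∀ t, q t ∈ Delta Y
  init : q 0 = a 0
  step : ∀ t, q (t + 1) = q t + γ t • (a (t + 1) - q t)
  br : ∀ t, a (t + 1) ∈ BR Y u (ε t) (centroid cls (q t))

/-- A solution of the differential inclusion `ẋ ∈ F(x)` taking values in `Δⁿ`:
an everywhere-`Δⁿ`-valued trajectory on `[0,∞)` which is the integral of a locally
integrable selection `g(t) ∈ F(x(t))` (a.e.). -/
def IsSolution (Y : ι → Finset A) (F : (ι → A → ℝ) → Set (ι → A → ℝ))
    (x : ℝ → ι → A → ℝ) : Prop :=
  (∀ t : ℝ, 0 ≤ t → x t ∈ Delta Y) ∧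
  ∃ g : ℝ → ι → A → ℝ,
    LocallyIntegrableOn g (Set.Ici (0 : ℝ)) ∧
    (∀ᵐ t ∂(volume.restrict (Set.Ici (0 : ℝ))), g t ∈ F (x t)) ∧
    ∀ t : ℝ, 0 ≤ t → x t = x 0 + ∫ s in Set.Ioc (0 : ℝ) t, g s

/-- Right-hand side of the joint CT-ECFP differential inclusion `q̇ ∈ BR(q̄) − q`. -/
def Fjoint (Y : ι → Finset A) (u : (ι → A) → ℝ) (cls : ι → κ)
    (q : ι → A → ℝ) : Set (ι → A → ℝ) :=
  (fun b => b - q) '' BR Y u 0 (centroid cls q)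

/-- Right-hand side of the centroid CT-ECFP differential inclusion `ẏ ∈ BR(y) − y`. -/
def Fcent (Y : ι → Finset A) (u : (ι → A) → ℝ)
    (y : ι → A → ℝ) : Set (ι → A → ℝ) :=
  (fun b => b - y) '' BR Y u 0 y

/-- The ω-limit set of a continuous-time trajectory: all limits of sequences
`x(t_k)` with `t_k → ∞`. -/
def omegaLimitSet (x : ℝ → ι → A → ℝ) : Set (ι → A → ℝ) :=
  {p | ∃ tk : ℕ → ℝ, Tendsto tk atTop atTop ∧ Tendsto (fun k => x (tk k)) atTop (𝓝 p)}

/-- The set of limit points of a (discrete-time) sequence. -/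
def seqLimitPoints (q : ℕ → ι → A → ℝ) : Set (ι → A → ℝ) :=
  {p | ∃ φ : ℕ → ℕ, StrictMono φ ∧ Tendsto (fun k => q (φ k)) atTop (𝓝 p)}

/-- A compact set `X ⊆ Δⁿ` is internally chain transitive for the inclusion `ẋ ∈ F(x)`:
any two points of `X` can be joined, for every `ε > 0` and `T > 0`, by finitely many
solution pieces of duration `> T` staying in `X`, with jumps of size `≤ ε`. -/
def InternallyChainTransitive (Y : ι → Finset A)
    (F : (ι → A → ℝ) → Set (ι → A → ℝ)) (X : Set (ι → A → ℝ)) : Prop :=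
  IsCompact X ∧ X ⊆ Delta Y ∧
  ∀ ξ ∈ X, ∀ η ∈ X, ∀ ε : ℝ, 0 < ε → ∀ T : ℝ, 0 < T →
    ∃ k : ℕ, 0 < k ∧ ∃ x : ℕ → ℝ → ι → A → ℝ, ∃ tt : ℕ → ℝ,
      (∀ i < k, IsSolution Y F (x i)) ∧
      (∀ i < k, T < tt i) ∧
      (∀ i < k, ∀ s : ℝ, 0 ≤ s → s ≤ tt i → x i s ∈ X) ∧
      (∀ i, i + 1 < k → ‖x i (tt i) - x (i + 1) 0‖ ≤ ε) ∧
      ‖x 0 0 - ξ‖ ≤ ε ∧ ‖x (k - 1) (tt (k - 1)) - η‖ ≤ ε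

variable [Nonempty ι]

section Aux
open Finset Function
open scoped Classical

variable {Y : ι → Finset A} {u : (ι → A) → ℝ} {cls : ι → κ}

/-- The pure strategy (point mass) at `a`. -/
def pureStrat (a : A) : A → ℝ := fun b => if b = a then 1 else 0

lemma pureStrat_mem {i : ι} {a : A} (ha : a ∈ Y i) : pureStrat a ∈ simplex (Y i) := by
  refine ⟨fun b => by unfold pureStrat; positivity, fun b hb => ?_, ?_⟩
  · simp only [pureStrat, ite_eq_right_iff]; rintro rfl; exact absurd ha hb
  · simp [pureStrat, Finset.sum_ite_eq' (Y i) a, ha]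

lemma prod_update (p : ι → A → ℝ) (i : ι) (v : A → ℝ) (y : ι → A) :
    ∏ k, Function.update p i v k (y k) = v (y i) * ∏ k ∈ univ.erase i, p k (y k) := by
  rw [← Finset.mul_prod_erase univ _ (mem_univ i), Function.update_self]
  congr 1
  exact Finset.prod_congr rfl fun k hk => by
    rw [Function.update_of_ne (Finset.ne_of_mem_erase hk)]

lemma U_update_eq (p : ι → A → ℝ) (i : ι) (v : A → ℝ) :
    U u (Function.update p i v)
      = ∑ y : ι → A, u y * (v (y i) * ∏ k ∈ univ.erase i, p k (y k)) := by
  unfold U; exact Finset.sum_congr rfl fun y _ => by rw [prod_update]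

lemma U_update_sum {β : Type*} (p : ι → A → ℝ) (i : ι) (s : Finset β) (f : β → A → ℝ) :
    U u (Function.update p i (∑ b ∈ s, f b))
      = ∑ b ∈ s, U u (Function.update p i (f b)) := by
  simp_rw [U_update_eq, Finset.sum_apply, Finset.sum_mul, Finset.mul_sum]
  exact Finset.sum_comm

lemma U_update_smul (p : ι → A → ℝ) (i : ι) (c : ℝ) (v : A → ℝ) :
    U u (Function.update p i (c • v)) = c * U u (Function.update p i v) := by
  simp_rw [U_update_eq, Finset.mul_sum]
  exact Finset.sum_congr rfl fun y _ => by simp [smul_eq_mul]; ring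

lemma U_update_sub (p : ι → A → ℝ) (i : ι) (v w : A → ℝ) :
    U u (Function.update p i (v - w))
      = U u (Function.update p i v) - U u (Function.update p i w) := by
  simp_rw [U_update_eq, ← Finset.sum_sub_distrib]
  exact Finset.sum_congr rfl fun y _ => by simp [Pi.sub_apply]; ring

lemma simplex_decomp {i : ι} {q : A → ℝ} (hq : q ∈ simplex (Y i)) :
    q = ∑ a ∈ Y i, q a • pureStrat a := by
  funext b
  rw [Finset.sum_apply]
  simp only [Pi.smul_apply, pureStrat, smul_eq_mul, mul_ite, mul_one, mul_zero]
  rw [Finset.sum_ite_eq (Y i) b q]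
  by_cases hb : b ∈ Y i
  · simp [hb]
  · simp [hb, hq.2.1 b hb]

lemma U_update_simplex (p : ι → A → ℝ) (i : ι) {q : A → ℝ} (hq : q ∈ simplex (Y i)) :
    U u (Function.update p i q)
      = ∑ a ∈ Y i, q a * U u (Function.update p i (pureStrat a)) := by
  conv_lhs => rw [simplex_decomp hq]
  rw [U_update_sum]
  exact Finset.sum_congr rfl fun a _ => U_update_smul ..

variable (u) in
/-- max of `U(update p i ·)` over pure strategies in `Y i`. -/
def Mmax (hY : ∀ i, (Y i).Nonempty) (p : ι → A → ℝ) (i : ι) : ℝ :=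
  (Y i).sup' (hY i) (fun a => U u (Function.update p i (pureStrat a)))

lemma le_Mmax (hY : ∀ i, (Y i).Nonempty) (p : ι → A → ℝ) (i : ι) {q : A → ℝ}
    (hq : q ∈ simplex (Y i)) :
    U u (Function.update p i q) ≤ Mmax u hY p i := by
  rw [U_update_simplex p i hq]
  have hle : ∀ a ∈ Y i, U u (Function.update p i (pureStrat a)) ≤ Mmax u hY p i := by
    intro a ha
    exact Finset.le_sup' (fun a => U u (Function.update p i (pureStrat a))) ha
  calc ∑ a ∈ Y i, q a * U u (Function.update p i (pureStrat a))
      ≤ ∑ a ∈ Y i, q a * Mmax u hY p i :=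
        Finset.sum_le_sum fun a ha =>
          mul_le_mul_of_nonneg_left (hle a ha) (hq.1 a)
    _ = Mmax u hY p i := by rw [← Finset.sum_mul, hq.2.2, one_mul]

lemma Mmax_attained (hY : ∀ i, (Y i).Nonempty) (p : ι → A → ℝ) (i : ι) :
    ∃ a ∈ Y i, Mmax u hY p i = U u (Function.update p i (pureStrat a)) := by
  obtain ⟨a, ha, h⟩ := Finset.exists_mem_eq_sup' (hY i)
    (fun a => U u (Function.update p i (pureStrat a)))
  exact ⟨a, ha, h⟩

end Aux
section Aux2
open Finset Function
open scoped Classical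

variable {Y : ι → Finset A} {u : (ι → A) → ℝ} {cls : ι → κ}

lemma swapStrat_eq (y : ι → A) (i j : ι) :
    swapStrat y i j = fun k => y (Equiv.swap i j k) := by
  funext k
  unfold swapStrat
  rcases eq_or_ne k j with rfl | hkj
  · rw [Function.update_self, Equiv.swap_apply_right]
  · rw [Function.update_of_ne hkj]
    rcases eq_or_ne k i with rfl | hki
    · rw [Function.update_self, Equiv.swap_apply_left]
    · rw [Function.update_of_ne hki, Equiv.swap_apply_of_ne_of_ne hki hkj]

lemma U_swap_mixed (hpi : PermInvariant Y u cls) {i j : ι} (hij : cls i = cls j)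
    (p : ι → A → ℝ) (hsupp : ∀ k a, a ∉ Y k → p k a = 0) :
    U u (Function.update (Function.update p i (p j)) j (p i)) = U u p := by
  rcases eq_or_ne i j with rfl | hne
  · rw [Function.update_idem, Function.update_eq_self]
  set σ := Equiv.swap i j with hσ
  have hp' : ∀ k, Function.update (Function.update p i (p j)) j (p i) k = p (σ k) := by
    intro k
    rcases eq_or_ne k j with rfl | hkj
    · rw [Function.update_self, hσ, Equiv.swap_apply_right]
    · rw [Function.update_of_ne hkj]
      rcases eq_or_ne k i with rfl | hki
      · rw [Function.update_self, hσ, Equiv.swap_apply_left]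
      · rw [Function.update_of_ne hki, hσ, Equiv.swap_apply_of_ne_of_ne hki hkj]
  let e : (ι → A) ≃ (ι → A) :=
    ⟨fun y k => y (σ k), fun y k => y (σ k),
      fun y => by funext k; simp [hσ, Equiv.swap_apply_self],
      fun y => by funext k; simp [hσ, Equiv.swap_apply_self]⟩
  have he : ∀ y k, e y k = y (σ k) := fun _ _ => rfl
  have step1 : U u (Function.update (Function.update p i (p j)) j (p i))
      = ∑ y : ι → A, u y * ∏ k, p k (y (σ k)) := by
    unfold U
    refine Finset.sum_congr rfl fun y _ => ?_
    congr 1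
    calc ∏ k, Function.update (Function.update p i (p j)) j (p i) k (y k)
        = ∏ k, p (σ k) (y k) := Finset.prod_congr rfl fun k _ => by rw [hp']
      _ = ∏ k, p k (y (σ k)) := by
          have := Equiv.prod_comp σ (fun k => p k (y (σ k)))
          rw [← this]
          refine Finset.prod_congr rfl fun k _ => ?_
          congr 2
          simp [hσ, Equiv.swap_apply_self]
  rw [step1]
  have step2 : ∑ y : ι → A, u y * ∏ k, p k (y (σ k))
      = ∑ y : ι → A, u (e y) * ∏ k, p k (y k) := by
    have := Equiv.sum_comp e (fun y : ι → A => u y * ∏ k, p k (y (σ k)))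
    rw [← this]
    refine Finset.sum_congr rfl fun y _ => ?_
    congr 1
    refine Finset.prod_congr rfl fun k _ => ?_
    rw [he]
    congr 1
    simp [hσ, Equiv.swap_apply_self]
  rw [step2]
  refine Finset.sum_congr rfl fun y _ => ?_
  by_cases hy : ∀ k, y k ∈ Y k
  · have : e y = swapStrat y i j := by rw [swapStrat_eq]; rfl
    rw [this, (hpi i j hij).2 y hy]
  · push_neg at hy
    obtain ⟨k, hk⟩ := hy
    have : ∏ k, p k (y k) = 0 :=
      Finset.prod_eq_zero (Finset.mem_univ k) (hsupp k (y k) hk)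
    rw [this, mul_zero, mul_zero]

lemma U_update_pair (hpi : PermInvariant Y u cls) {i j : ι} (hij : cls i = cls j)
    (p : ι → A → ℝ) (hsupp : ∀ k a, a ∉ Y k → p k a = 0) (hcc : p i = p j)
    {v : A → ℝ} (hv : ∀ a, a ∉ Y j → v a = 0) :
    U u (Function.update p i v) = U u (Function.update p j v) := by
  rcases eq_or_ne i j with rfl | hne
  · rfl
  have hsupp' : ∀ k a, a ∉ Y k → Function.update p j v k a = 0 := by
    intro k a ha
    rcases eq_or_ne k j with rfl | hkj
    · rw [Function.update_self]; exact hv a ha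
    · rw [Function.update_of_ne hkj]; exact hsupp k a ha
  have hs := U_swap_mixed hpi hij (Function.update p j v) hsupp'
  have harg : Function.update (Function.update (Function.update p j v) i
      (Function.update p j v j)) j (Function.update p j v i)
      = Function.update p i v := by
    funext k
    rcases eq_or_ne k j with rfl | hkj
    · rw [Function.update_self, Function.update_of_ne hne,
        Function.update_of_ne hne.symm, hcc]
    · rw [Function.update_of_ne hkj]
      rcases eq_or_ne k i with rfl | hki
      · rw [Function.update_self, Function.update_self, Function.update_self]
      · rw [Function.update_of_ne hki, Function.update_of_ne hki,
          Function.update_of_ne hkj]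
  rw [harg] at hs
  exact hs
end Aux2
section Aux3
open Finset Function
open scoped Classical

variable {Y : ι → Finset A} {u : (ι → A) → ℝ} {cls : ι → κ}

lemma mem_cluster {i j : ι} : j ∈ cluster cls i ↔ cls j = cls i := by
  simp [cluster]

lemma cluster_eq {i j : ι} (h : cls i = cls j) : cluster cls i = cluster cls j := by
  unfold cluster; simp_rw [h]

lemma cluster_card_pos (i : ι) : 0 < (cluster cls i).card :=
  Finset.card_pos.2 ⟨i, mem_cluster.2 rfl⟩

lemma centroid_apply (p : ι → A → ℝ) (i : ι) (a : A) :
    centroid cls p i a = ((cluster cls i).card : ℝ)⁻¹ * ∑ j ∈ cluster cls i, p j a := by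
  unfold centroid
  rw [Pi.smul_apply, Finset.sum_apply, smul_eq_mul]

lemma centroid_classConst (p : ι → A → ℝ) {i j : ι} (h : cls i = cls j) :
    centroid cls p i = centroid cls p j := by
  unfold centroid; rw [cluster_eq h]

lemma centroid_supp (hYc : ∀ i j, cls i = cls j → Y i = Y j)
    {p : ι → A → ℝ} (hp : ∀ k a, a ∉ Y k → p k a = 0) :
    ∀ k a, a ∉ Y k → centroid cls p k a = 0 := by
  intro k a ha
  rw [centroid_apply]
  have : ∀ j ∈ cluster cls k, p j a = 0 := by
    intro j hj
    exact hp j a (by rwa [hYc j k (mem_cluster.1 hj)])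
  rw [Finset.sum_eq_zero this, mul_zero]

lemma centroid_mem_simplex (hYc : ∀ i j, cls i = cls j → Y i = Y j)
    {p : ι → A → ℝ} (hp : p ∈ Delta Y) (i : ι) :
    centroid cls p i ∈ simplex (Y i) := by
  refine ⟨fun a => ?_, fun a ha => centroid_supp hYc (fun k a ha => (hp k).2.1 a ha) i a ha, ?_⟩
  · rw [centroid_apply]
    have : (0:ℝ) ≤ ∑ j ∈ cluster cls i, p j a :=
      Finset.sum_nonneg fun j _ => (hp j).1 a
    positivity
  · simp_rw [centroid_apply]
    rw [← Finset.mul_sum, Finset.sum_comm]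
    have : ∀ j ∈ cluster cls i, ∑ a ∈ Y i, p j a = 1 := by
      intro j hj
      rw [hYc i j (mem_cluster.1 hj).symm]
      exact (hp j).2.2
    rw [Finset.sum_congr rfl this, Finset.sum_const, nsmul_eq_mul, mul_one]
    rw [inv_mul_cancel₀]
    exact_mod_cast (cluster_card_pos (cls := cls) i).ne'

lemma centroid_sub (p q : ι → A → ℝ) :
    centroid cls (p - q) = centroid cls p - centroid cls q := by
  funext i a
  simp only [Pi.sub_apply, centroid_apply, Finset.sum_sub_distrib]
  ring

/-- Key double-counting identity. -/
lemma sum_U_centroid (hpi : PermInvariant Y u cls) {p : ι → A → ℝ} (hp : p ∈ Delta Y)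
    (w : ι → A → ℝ) (hw : ∀ k a, a ∉ Y k → w k a = 0) :
    ∑ i, U u (Function.update (centroid cls p) i (centroid cls w i))
      = ∑ j, U u (Function.update (centroid cls p) j (w j)) := by
  have hYc : ∀ i j, cls i = cls j → Y i = Y j := fun i j h => (hpi i j h).1
  set c := centroid cls p with hc
  have hcsupp : ∀ k a, a ∉ Y k → c k a = 0 :=
    centroid_supp hYc (fun k a ha => (hp k).2.1 a ha)
  have hterm : ∀ i, U u (Function.update c i (centroid cls w i))
      = ((cluster cls i).card : ℝ)⁻¹ *
        ∑ j ∈ cluster cls i, U u (Function.update c j (w j)) := by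
    intro i
    have : centroid cls w i = ((cluster cls i).card : ℝ)⁻¹ • ∑ j ∈ cluster cls i, w j := rfl
    rw [this, U_update_smul, U_update_sum]
    congr 1
    refine Finset.sum_congr rfl fun j hj => ?_
    have hij : cls i = cls j := (mem_cluster.1 hj).symm
    exact U_update_pair hpi hij c hcsupp (centroid_classConst p hij)
      (fun a ha => hw j a ha)
  calc ∑ i, U u (Function.update c i (centroid cls w i))
      = ∑ i, ∑ j, (if cls j = cls i then
          ((cluster cls j).card : ℝ)⁻¹ * U u (Function.update c j (w j)) else 0) := by
        refine Finset.sum_congr rfl fun i _ => ?_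
        rw [hterm i, Finset.mul_sum]
        rw [show (cluster cls i) = Finset.univ.filter (fun j => cls j = cls i) from rfl,
          Finset.sum_filter]
        refine Finset.sum_congr rfl fun j _ => ?_
        by_cases h : cls j = cls i
        · simp only [h, if_true]
          rw [cluster_eq h]
          rfl
        · simp [h]
    _ = ∑ j, ∑ i, (if cls j = cls i then
          ((cluster cls j).card : ℝ)⁻¹ * U u (Function.update c j (w j)) else 0) :=
        Finset.sum_comm
    _ = ∑ j, U u (Function.update c j (w j)) := by
        refine Finset.sum_congr rfl fun j _ => ?_
        rw [← Finset.sum_filter]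
        rw [Finset.sum_const]
        have hcard : (Finset.univ.filter (fun i => cls j = cls i)).card
            = (cluster cls j).card := by
          congr 1
          unfold cluster
          refine Finset.filter_congr fun i _ => ?_
          simp [eq_comm]
        rw [hcard, nsmul_eq_mul, ← mul_assoc, mul_inv_cancel₀, one_mul]
        exact_mod_cast (cluster_card_pos (cls := cls) j).ne'

lemma sum_U_self (hpi : PermInvariant Y u cls) {p : ι → A → ℝ} (hp : p ∈ Delta Y) :
    ∑ j, U u (Function.update (centroid cls p) j (p j))
      = (Fintype.card ι : ℝ) * U u (centroid cls p) := by
  rw [← sum_U_centroid hpi hp p (fun k a ha => (hp k).2.1 a ha)]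
  have : ∀ i, Function.update (centroid cls p) i (centroid cls p i) = centroid cls p :=
    fun i => Function.update_eq_self i _
  simp_rw [this]
  rw [Finset.sum_const, Finset.card_univ, nsmul_eq_mul]

lemma Vfun_eq (hpi : PermInvariant Y u cls) {p : ι → A → ℝ} (hp : p ∈ Delta Y) :
    Vfun u cls p = U u (centroid cls p) := by
  unfold Vfun
  rw [sum_U_self hpi hp, ← mul_assoc, inv_mul_cancel₀, one_mul]
  exact_mod_cast Fintype.card_ne_zero

lemma U_update_BR (hY : ∀ i, (Y i).Nonempty) {c : ι → A → ℝ} {b : ι → A → ℝ}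
    (hb : b ∈ BR Y u 0 c) (j : ι) :
    U u (Function.update c j (b j)) = Mmax u hY c j := by
  obtain ⟨a, ha, hM⟩ := Mmax_attained (u := u) hY c j
  refine le_antisymm (le_Mmax hY c j (hb j).1) ?_
  rw [hM]
  have := (hb j).2 (pureStrat a) (pureStrat_mem ha)
  linarith

variable (u cls) in
/-- The total best-response deficiency. -/
def Dfun (hY : ∀ i, (Y i).Nonempty) (p : ι → A → ℝ) : ℝ :=
  ∑ j, (Mmax u hY (centroid cls p) j - U u (Function.update (centroid cls p) j (p j)))

lemma Dfun_term_nonneg (hY : ∀ i, (Y i).Nonempty) {p : ι → A → ℝ} (hp : p ∈ Delta Y) (j : ι) :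
    0 ≤ Mmax u hY (centroid cls p) j - U u (Function.update (centroid cls p) j (p j)) :=
  sub_nonneg.2 (le_Mmax hY _ j (hp j))

lemma Dfun_nonneg (hY : ∀ i, (Y i).Nonempty) {p : ι → A → ℝ} (hp : p ∈ Delta Y) :
    0 ≤ Dfun u cls hY p :=
  Finset.sum_nonneg fun j _ => Dfun_term_nonneg hY hp j

lemma Dfun_eq_zero_iff (hY : ∀ i, (Y i).Nonempty) {p : ι → A → ℝ} (hp : p ∈ Delta Y) :
    Dfun u cls hY p = 0 ↔ p ∈ MCE Y u cls := by
  constructor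
  · intro h
    have hz := (Finset.sum_eq_zero_iff_of_nonneg
      (fun j _ => Dfun_term_nonneg hY hp j)).1 h
    refine ⟨hp, fun i qi hqi => ?_⟩
    have hi := hz i (Finset.mem_univ i)
    have : U u (Function.update (centroid cls p) i (p i)) = Mmax u hY (centroid cls p) i := by
      linarith [sub_eq_zero.1 hi]
    rw [this]
    exact le_Mmax hY _ i hqi
  · intro hmce
    refine Finset.sum_eq_zero fun j _ => ?_
    obtain ⟨a, ha, hM⟩ := Mmax_attained (u := u) hY (centroid cls p) j
    have h1 : Mmax u hY (centroid cls p) j ≤ U u (Function.update (centroid cls p) j (p j)) := by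
      rw [hM]
      exact hmce.2 j (pureStrat a) (pureStrat_mem ha)
    have h2 := le_Mmax (u := u) hY (centroid cls p) j (hp j)
    linarith

end Aux3
section FTC1
open MeasureTheory Set

lemma diag_null {r t : ℝ} :
    ((volume.restrict (Ioc r t)).prod (volume.restrict (Ioc r t)))
      {z : ℝ × ℝ | z.1 = z.2} = 0 := by
  have hm : MeasurableSet {z : ℝ × ℝ | z.1 = z.2} :=
    measurableSet_eq_fun measurable_fst measurable_snd
  rw [MeasureTheory.Measure.prod_apply hm]
  have : ∀ x : ℝ, (volume.restrict (Ioc r t)) (Prod.mk x ⁻¹' {z : ℝ × ℝ | z.1 = z.2}) = 0 := by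
    intro x
    have : Prod.mk x ⁻¹' {z : ℝ × ℝ | z.1 = z.2} = {x} := by
      ext y; simp [eq_comm]
    rw [this]
    refine le_antisymm (le_trans (Measure.restrict_le_self _) ?_) (zero_le)
    simp
  simp [this]

lemma key_swap_identity {r t : ℝ} (hrt : r ≤ t) {g1 g2 : ℝ → ℝ}
    (h1 : IntegrableOn g1 (Ioc r t)) (h2 : IntegrableOn g2 (Ioc r t)) :
    (∫ s in Ioc r t, g1 s * ∫ v in Ioc r s, g2 v)
      + (∫ s in Ioc r t, g2 s * ∫ v in Ioc r s, g1 v)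
      = (∫ s in Ioc r t, g1 s) * (∫ s in Ioc r t, g2 s) := by
  set μ := volume.restrict (Ioc r t) with hμ
  have hE : MeasurableSet {z : ℝ × ℝ | z.2 ≤ z.1} :=
    measurableSet_le measurable_snd measurable_fst
  -- the product integrands
  set Φ : ℝ × ℝ → ℝ := fun z => if z.2 ≤ z.1 then g1 z.1 * g2 z.2 else 0 with hΦ
  set Ψ : ℝ × ℝ → ℝ := fun z => if z.2 ≤ z.1 then g2 z.1 * g1 z.2 else 0 with hΨ
  have hΦeq : Φ = ({z : ℝ × ℝ | z.2 ≤ z.1}).indicator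
      (fun z : ℝ × ℝ => g1 z.1 * g2 z.2) := by
    funext z; rw [Set.indicator_apply]; rfl
  have hΨeq : Ψ = ({z : ℝ × ℝ | z.2 ≤ z.1}).indicator
      (fun z : ℝ × ℝ => g2 z.1 * g1 z.2) := by
    funext z; rw [Set.indicator_apply]; rfl
  have hΦint : Integrable Φ (μ.prod μ) := by
    rw [hΦeq]; exact (h1.mul_prod h2).indicator hE
  have hΨint : Integrable Ψ (μ.prod μ) := by
    rw [hΨeq]; exact (h2.mul_prod h1).indicator hE
  -- term 1
  have hterm : ∀ (f k : ℝ → ℝ), IntegrableOn f (Ioc r t) → IntegrableOn k (Ioc r t) →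
      (∫ s in Ioc r t, f s * ∫ v in Ioc r s, k v)
        = ∫ z, (if z.2 ≤ z.1 then f z.1 * k z.2 else 0) ∂(μ.prod μ) := by
    intro f k hf hk
    have step : ∀ s ∈ Ioc r t,
        f s * (∫ v in Ioc r s, k v) = ∫ v, (if v ≤ s then f s * k v else 0) ∂μ := by
      intro s hs
      have h1' : (∫ v in Ioc r s, k v) = ∫ v, (Iic s).indicator k v ∂μ := by
        rw [hμ, MeasureTheory.setIntegral_indicator measurableSet_Iic,
          Set.Ioc_inter_Iic, min_eq_right hs.2]
      rw [h1', ← MeasureTheory.integral_const_mul]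
      refine integral_congr_ae (Filter.Eventually.of_forall fun v => ?_)
      by_cases hv : v ≤ s <;>
        simp [Set.indicator_apply, Set.mem_Iic, hv]
    have : (∫ s in Ioc r t, f s * ∫ v in Ioc r s, k v)
        = ∫ s, ∫ v, (if v ≤ s then f s * k v else 0) ∂μ ∂μ := by
      rw [hμ]
      refine setIntegral_congr_fun measurableSet_Ioc fun s hs => ?_
      exact step s hs
    rw [this]
    have hint : Integrable (Function.uncurry fun s v =>
        (if v ≤ s then f s * k v else 0) : ℝ × ℝ → ℝ) (μ.prod μ) := by
      have : (Function.uncurry fun s v => (if v ≤ s then f s * k v else 0) : ℝ × ℝ → ℝ)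
          = ({z : ℝ × ℝ | z.2 ≤ z.1}).indicator (fun z : ℝ × ℝ => f z.1 * k z.2) := by
        funext z; rw [Set.indicator_apply]; rfl
      rw [this]
      exact (hf.mul_prod hk).indicator hE
    rw [MeasureTheory.integral_integral hint]
  rw [hterm g1 g2 h1 h2, hterm g2 g1 h2 h1]
  have hswap : (∫ z, (if z.2 ≤ z.1 then g2 z.1 * g1 z.2 else 0) ∂(μ.prod μ))
      = ∫ z, (if z.1 ≤ z.2 then g2 z.2 * g1 z.1 else 0) ∂(μ.prod μ) := by
    have := MeasureTheory.integral_prod_swap (μ := μ) (ν := μ) Ψ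
    rw [← this]
    rfl
  rw [hswap]
  have hsum : ∫ z, ((if z.2 ≤ z.1 then g1 z.1 * g2 z.2 else 0)
        + (if z.1 ≤ z.2 then g2 z.2 * g1 z.1 else 0)) ∂(μ.prod μ)
      = (∫ z, (if z.2 ≤ z.1 then g1 z.1 * g2 z.2 else 0) ∂(μ.prod μ))
        + ∫ z, (if z.1 ≤ z.2 then g2 z.2 * g1 z.1 else 0) ∂(μ.prod μ) := by
    refine MeasureTheory.integral_add hΦint ?_
    have : (fun z : ℝ × ℝ => (if z.1 ≤ z.2 then g2 z.2 * g1 z.1 else 0)) = fun z => Ψ z.swap := by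
      funext z; rfl
    rw [this]
    exact hΨint.swap
  rw [← hsum]
  have hae : (fun z : ℝ × ℝ => (if z.2 ≤ z.1 then g1 z.1 * g2 z.2 else 0)
        + (if z.1 ≤ z.2 then g2 z.2 * g1 z.1 else 0))
      =ᵐ[μ.prod μ] fun z => g1 z.1 * g2 z.2 := by
    have hsub : {z : ℝ × ℝ | ¬ ((if z.2 ≤ z.1 then g1 z.1 * g2 z.2 else 0)
        + (if z.1 ≤ z.2 then g2 z.2 * g1 z.1 else 0) = g1 z.1 * g2 z.2)}
        ⊆ {z : ℝ × ℝ | z.1 = z.2} := by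
      intro z hz
      simp only [Set.mem_setOf_eq] at hz ⊢
      by_contra hne
      rcases lt_or_gt_of_ne hne with h | h
      · rw [if_neg (not_le.2 h), if_pos h.le, zero_add] at hz
        exact hz (mul_comm _ _)
      · rw [if_pos h.le, if_neg (not_le.2 h), add_zero] at hz
        exact hz rfl
    exact measure_mono_null hsub diag_null
  rw [integral_congr_ae hae, MeasureTheory.integral_prod_mul]

end FTC1
section FTC2
open MeasureTheory Set

/-- primitive with base point `r`, over `Ioc`. -/
lemma integrable_mul_primitive {r t : ℝ} {f k : ℝ → ℝ}
    (hf : IntegrableOn f (Ioc r t)) (hk : ContinuousOn k (Icc r t)) :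
    IntegrableOn (fun s => f s * k s) (Ioc r t) := by
  obtain ⟨C, hC⟩ := (isCompact_Icc (a := r) (b := t)).exists_bound_of_continuousOn hk
  refine Integrable.mono' (hf.norm.mul_const C) ?_ ?_
  · exact hf.aestronglyMeasurable.mul
      ((hk.mono Ioc_subset_Icc_self).aestronglyMeasurable measurableSet_Ioc)
  · refine (MeasureTheory.ae_restrict_mem measurableSet_Ioc).mono fun s hs => ?_
    rw [norm_mul]
    exact mul_le_mul_of_nonneg_left (hC s (Ioc_subset_Icc_self hs)) (norm_nonneg _)

lemma prod_two_primitive {r t : ℝ} (hrt : r ≤ t) {g1 g2 : ℝ → ℝ}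
    (h1 : IntegrableOn g1 (Ioc r t)) (h2 : IntegrableOn g2 (Ioc r t)) (c1 c2 : ℝ) :
    (c1 + ∫ s in Ioc r t, g1 s) * (c2 + ∫ s in Ioc r t, g2 s)
      = c1 * c2 + ∫ s in Ioc r t,
        (g1 s * (c2 + ∫ v in Ioc r s, g2 v) + g2 s * (c1 + ∫ v in Ioc r s, g1 v)) := by
  have h1' : IntegrableOn g1 (Icc r t) := by
    rwa [integrableOn_Icc_iff_integrableOn_Ioc]
  have h2' : IntegrableOn g2 (Icc r t) := by
    rwa [integrableOn_Icc_iff_integrableOn_Ioc]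
  have hP1 : ContinuousOn (fun s => ∫ v in Ioc r s, g1 v) (Icc r t) :=
    intervalIntegral.continuousOn_primitive h1'
  have hP2 : ContinuousOn (fun s => ∫ v in Ioc r s, g2 v) (Icc r t) :=
    intervalIntegral.continuousOn_primitive h2'
  have i1 : IntegrableOn (fun s => g1 s * (c2 + ∫ v in Ioc r s, g2 v)) (Ioc r t) :=
    integrable_mul_primitive h1 (continuousOn_const.add hP2)
  have i2 : IntegrableOn (fun s => g2 s * (c1 + ∫ v in Ioc r s, g1 v)) (Ioc r t) :=
    integrable_mul_primitive h2 (continuousOn_const.add hP1)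
  rw [MeasureTheory.integral_add i1 i2]
  have e1 : (∫ s in Ioc r t, g1 s * (c2 + ∫ v in Ioc r s, g2 v))
      = c2 * (∫ s in Ioc r t, g1 s) + ∫ s in Ioc r t, g1 s * ∫ v in Ioc r s, g2 v := by
    have : ∀ s, g1 s * (c2 + ∫ v in Ioc r s, g2 v)
        = c2 * g1 s + g1 s * ∫ v in Ioc r s, g2 v := fun s => by ring
    simp_rw [this]
    rw [MeasureTheory.integral_add (h1.const_mul c2)
      (integrable_mul_primitive h1 hP2), MeasureTheory.integral_const_mul]
  have e2 : (∫ s in Ioc r t, g2 s * (c1 + ∫ v in Ioc r s, g1 v))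
      = c1 * (∫ s in Ioc r t, g2 s) + ∫ s in Ioc r t, g2 s * ∫ v in Ioc r s, g1 v := by
    have : ∀ s, g2 s * (c1 + ∫ v in Ioc r s, g1 v)
        = c1 * g2 s + g2 s * ∫ v in Ioc r s, g1 v := fun s => by ring
    simp_rw [this]
    rw [MeasureTheory.integral_add (h2.const_mul c1)
      (integrable_mul_primitive h2 hP1), MeasureTheory.integral_const_mul]
  rw [e1, e2]
  have := key_swap_identity hrt h1 h2
  ring_nf
  ring_nf at this
  linarith

end FTC2
section FTC3
open MeasureTheory Set

lemma prod_primitive_finset {ι' : Type*} [DecidableEq ι'] {r t0 : ℝ}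
    (c : ι' → ℝ) (g : ι' → ℝ → ℝ) (S : Finset ι')
    (hg : ∀ k ∈ S, IntegrableOn (g k) (Ioc r t0)) :
    (∀ t, r ≤ t → t ≤ t0 →
      ∏ k ∈ S, (c k + ∫ v in Ioc r t, g k v)
        = (∏ k ∈ S, c k) + ∫ s in Ioc r t,
            ∑ k ∈ S, g k s * ∏ l ∈ S.erase k, (c l + ∫ v in Ioc r s, g l v))
    ∧ IntegrableOn (fun s => ∑ k ∈ S,
        g k s * ∏ l ∈ S.erase k, (c l + ∫ v in Ioc r s, g l v)) (Ioc r t0) := by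
  classical
  have hcont : ∀ (F : Finset ι'), (∀ k ∈ F, IntegrableOn (g k) (Ioc r t0)) →
      ContinuousOn (fun s => ∏ l ∈ F, (c l + ∫ v in Ioc r s, g l v)) (Icc r t0) := by
    intro F hF
    refine continuousOn_finset_prod F fun l hl => ?_
    exact continuousOn_const.add (intervalIntegral.continuousOn_primitive
      (Iff.mpr integrableOn_Icc_iff_integrableOn_Ioc (hF l hl)))
  induction S using Finset.induction_on with
  | empty =>
      constructor
      · intro t _ _; simp
      · simp only [Finset.sum_empty]
        exact integrableOn_zero
  | @insert a S ha IH =>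
      have hgS : ∀ k ∈ S, IntegrableOn (g k) (Ioc r t0) :=
        fun k hk => hg k (Finset.mem_insert_of_mem hk)
      obtain ⟨IH1, IH2⟩ := IH hgS
      have hga : IntegrableOn (g a) (Ioc r t0) := hg a (Finset.mem_insert_self a S)
      -- notation
      set h : ι' → ℝ → ℝ := fun k s => c k + ∫ v in Ioc r s, g k v with hh
      set G : ℝ → ℝ := fun s => ∑ k ∈ S, g k s * ∏ l ∈ S.erase k, h l s with hG
      -- rewriting target integrand
      have hintegrand : ∀ s,
          ∑ k ∈ insert a S, g k s * ∏ l ∈ (insert a S).erase k, h l s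
            = g a s * ∏ l ∈ S, h l s + G s * h a s := by
        intro s
        rw [Finset.sum_insert ha, Finset.erase_insert ha]
        congr 1
        rw [hG, Finset.sum_mul]
        refine Finset.sum_congr rfl fun k hk => ?_
        have hka : k ≠ a := fun h' => ha (h' ▸ hk)
        rw [Finset.erase_insert_of_ne hka.symm,
          Finset.prod_insert (fun h' => ha (Finset.mem_of_mem_erase h'))]
        ring
      have hGint : IntegrableOn G (Ioc r t0) := IH2
      -- integrability of new integrand
      have hint_new : IntegrableOn (fun s =>
          ∑ k ∈ insert a S, g k s * ∏ l ∈ (insert a S).erase k, h l s) (Ioc r t0) := by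
        have e : (fun s => ∑ k ∈ insert a S, g k s * ∏ l ∈ (insert a S).erase k, h l s)
            = fun s => g a s * ∏ l ∈ S, h l s + G s * h a s := funext hintegrand
        rw [e]
        refine Integrable.add ?_ ?_
        · exact integrable_mul_primitive hga (hcont S hgS)
        · have : ContinuousOn (h a) (Icc r t0) := by
            have := hcont {a} (by simpa using hga)
            simpa using this
          exact integrable_mul_primitive hGint this
      refine ⟨?_, hint_new⟩
      intro t hrt htt0
      have hmono : Ioc r t ⊆ Ioc r t0 := Ioc_subset_Ioc le_rfl htt0
      rw [Finset.prod_insert ha]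
      rw [IH1 t hrt htt0]
      rw [show (c a + ∫ v in Ioc r t, g a v) = h a t from rfl]
      have two := prod_two_primitive hrt (hga.mono_set hmono) (hGint.mono_set hmono)
        (c a) (∏ k ∈ S, c k)
      rw [two, Finset.prod_insert ha]
      congr 1
      refine setIntegral_congr_fun measurableSet_Ioc fun s hs => ?_
      have hrs : r ≤ s := hs.1.le
      have hst0 : s ≤ t0 := hs.2.trans htt0
      rw [hintegrand s]
      have hout : (∏ k ∈ S, c k) + ∫ v in Ioc r s, G v = ∏ l ∈ S, h l s :=
        (IH1 s hrs hst0).symm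
      rw [hout]
end FTC3
section Main1
open MeasureTheory Set Function

variable {Y : ι → Finset A} {u : (ι → A) → ℝ} {cls : ι → κ}

lemma integral_coord {S : Set ℝ} {g : ℝ → ι → A → ℝ} (hint : IntegrableOn g S) (j : ι) (a : A) :
    (∫ s in S, g s) j a = ∫ s in S, g s j a := by
  let L : (ι → A → ℝ) →L[ℝ] ℝ :=
    (ContinuousLinearMap.proj a).comp (ContinuousLinearMap.proj (R := ℝ) (φ := fun _ : ι => A → ℝ) j)
  have := (L.integral_comp_comm hint).symm
  simpa [L] using this

lemma coord_integrableOn {S : Set ℝ} {g : ℝ → ι → A → ℝ} (hint : IntegrableOn g S)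
    (j : ι) (a : A) : IntegrableOn (fun s => g s j a) S := by
  let L : (ι → A → ℝ) →L[ℝ] ℝ :=
    (ContinuousLinearMap.proj a).comp (ContinuousLinearMap.proj (R := ℝ) (φ := fun _ : ι => A → ℝ) j)
  have := L.integrable_comp hint
  simpa [L, IntegrableOn] using this

variable {x g : ℝ → ι → A → ℝ}

lemma g_integrableOn (hg : LocallyIntegrableOn g (Ici (0:ℝ)) volume) {r t : ℝ}
    (hr : 0 ≤ r) : IntegrableOn g (Ioc r t) := by
  rcases le_or_gt r t with h | h
  · have : IntegrableOn g (Icc r t) :=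
      hg.integrableOn_compact_subset (Icc_subset_Ici_self.trans (Ici_subset_Ici.2 hr))
        isCompact_Icc
    exact this.mono_set Ioc_subset_Icc_self
  · rw [Set.Ioc_eq_empty (not_lt.2 h.le)]
    simp [IntegrableOn]

lemma solution_coord (hg : LocallyIntegrableOn g (Ici (0:ℝ)) volume)
    (hrep : ∀ t : ℝ, 0 ≤ t → x t = x 0 + ∫ s in Ioc (0:ℝ) t, g s)
    {r t : ℝ} (hr : 0 ≤ r) (hrt : r ≤ t) (j : ι) (a : A) :
    x t j a = x r j a + ∫ s in Ioc r t, g s j a := by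
  have h0t : IntegrableOn g (Ioc 0 t) := g_integrableOn hg le_rfl
  have h0r : IntegrableOn g (Ioc 0 r) := g_integrableOn hg le_rfl
  have hrt' : IntegrableOn g (Ioc r t) := g_integrableOn hg hr
  have hsplit : (∫ s in Ioc (0:ℝ) t, g s) = (∫ s in Ioc (0:ℝ) r, g s) + ∫ s in Ioc r t, g s := by
    rw [← MeasureTheory.setIntegral_union (Set.Ioc_disjoint_Ioc_of_le le_rfl) measurableSet_Ioc h0r hrt']
    rw [Set.Ioc_union_Ioc_eq_Ioc hr hrt]
  have ht := hrep t (hr.trans hrt)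
  have hr' := hrep r hr
  rw [ht, hsplit, hr']
  simp only [Pi.add_apply]
  rw [integral_coord hrt' j a]
  ring

lemma centroid_coord_rep (hg : LocallyIntegrableOn g (Ici (0:ℝ)) volume)
    (hrep : ∀ t : ℝ, 0 ≤ t → x t = x 0 + ∫ s in Ioc (0:ℝ) t, g s)
    {r t : ℝ} (hr : 0 ≤ r) (hrt : r ≤ t) (k : ι) (a : A) :
    centroid cls (x t) k a
      = centroid cls (x r) k a + ∫ s in Ioc r t, centroid cls (g s) k a := by
  have hint : ∀ j, IntegrableOn (fun s => g s j a) (Ioc r t) :=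
    fun j => coord_integrableOn (g_integrableOn hg hr) j a
  simp_rw [centroid_apply]
  have : (∫ s in Ioc r t, ((cluster cls k).card : ℝ)⁻¹ * ∑ j ∈ cluster cls k, g s j a)
      = ((cluster cls k).card : ℝ)⁻¹ * ∑ j ∈ cluster cls k, ∫ s in Ioc r t, g s j a := by
    rw [MeasureTheory.integral_const_mul]
    congr 1
    exact MeasureTheory.integral_finset_sum _ fun j _ => hint j
  rw [this, ← mul_add, ← Finset.sum_add_distrib]
  congr 1
  exact Finset.sum_congr rfl fun j _ => solution_coord hg hrep hr hrt j a

lemma centroid_g_coord_integrableOn (hg : LocallyIntegrableOn g (Ici (0:ℝ)) volume)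
    {r t : ℝ} (hr : 0 ≤ r) (k : ι) (a : A) :
    IntegrableOn (fun s => centroid cls (g s) k a) (Ioc r t) := by
  have hint : ∀ j, IntegrableOn (fun s => g s j a) (Ioc r t) :=
    fun j => coord_integrableOn (g_integrableOn hg hr) j a
  simp_rw [centroid_apply]
  exact (MeasureTheory.integrable_finset_sum _ fun j _ => hint j).const_mul _

/-- Fundamental theorem of calculus for `U ∘ centroid ∘ x`. -/
lemma V_FTC (hg : LocallyIntegrableOn g (Ici (0:ℝ)) volume)
    (hrep : ∀ t : ℝ, 0 ≤ t → x t = x 0 + ∫ s in Ioc (0:ℝ) t, g s)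
    {r t : ℝ} (hr : 0 ≤ r) (hrt : r ≤ t) :
    U u (centroid cls (x t)) = U u (centroid cls (x r))
        + ∫ s in Ioc r t, ∑ i, U u (Function.update (centroid cls (x s)) i (centroid cls (g s) i)) := by
  classical
  -- per-profile data
  have main : ∀ y : ι → A,
      (∏ k, centroid cls (x t) k (y k) = ∏ k, centroid cls (x r) k (y k)
        + ∫ s in Ioc r t, ∑ k, centroid cls (g s) k (y k)
            * ∏ l ∈ Finset.univ.erase k, centroid cls (x s) l (y l))
      ∧ IntegrableOn (fun s => ∑ k, centroid cls (g s) k (y k)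
            * ∏ l ∈ Finset.univ.erase k, centroid cls (x s) l (y l)) (Ioc r t) := by
    intro y
    set c : ι → ℝ := fun k => centroid cls (x r) k (y k) with hc
    set G : ι → ℝ → ℝ := fun k s => centroid cls (g s) k (y k) with hG
    have hGint : ∀ k ∈ Finset.univ, IntegrableOn (G k) (Ioc r t) :=
      fun k _ => centroid_g_coord_integrableOn hg hr k (y k)
    obtain ⟨H1, H2⟩ := prod_primitive_finset c G Finset.univ hGint
    have hcoord : ∀ s, r ≤ s → ∀ k, c k + ∫ v in Ioc r s, G k v = centroid cls (x s) k (y k) :=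
      fun s hs k => (centroid_coord_rep hg hrep hr hs k (y k)).symm
    have hEq : EqOn (fun s => ∑ k, G k s * ∏ l ∈ Finset.univ.erase k, (c l + ∫ v in Ioc r s, G l v))
        (fun s => ∑ k, centroid cls (g s) k (y k)
          * ∏ l ∈ Finset.univ.erase k, centroid cls (x s) l (y l)) (Ioc r t) := by
      intro s hs
      simp only
      refine Finset.sum_congr rfl fun k _ => ?_
      congr 1
      exact Finset.prod_congr rfl fun l _ => hcoord s hs.1.le l
    constructor
    · have := H1 t hrt le_rfl
      calc ∏ k, centroid cls (x t) k (y k)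
          = ∏ k, (c k + ∫ v in Ioc r t, G k v) := by
            refine Finset.prod_congr rfl fun k _ => (hcoord t hrt k).symm
        _ = (∏ k, c k) + ∫ s in Ioc r t,
              ∑ k, G k s * ∏ l ∈ Finset.univ.erase k, (c l + ∫ v in Ioc r s, G l v) := this
        _ = ∏ k, centroid cls (x r) k (y k) + ∫ s in Ioc r t,
              ∑ k, centroid cls (g s) k (y k)
                * ∏ l ∈ Finset.univ.erase k, centroid cls (x s) l (y l) := by
            congr 1
            exact setIntegral_congr_fun measurableSet_Ioc hEq
    · exact (H2.congr_fun hEq measurableSet_Ioc)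
  -- sum over y
  have hUt : U u (centroid cls (x t)) = ∑ y : ι → A, u y *
      (∏ k, centroid cls (x r) k (y k)
        + ∫ s in Ioc r t, ∑ k, centroid cls (g s) k (y k)
            * ∏ l ∈ Finset.univ.erase k, centroid cls (x s) l (y l)) := by
    unfold U
    exact Finset.sum_congr rfl fun y _ => by rw [(main y).1]
  rw [hUt]
  have expand : ∀ y : ι → A, u y *
      (∏ k, centroid cls (x r) k (y k)
        + ∫ s in Ioc r t, ∑ k, centroid cls (g s) k (y k)
            * ∏ l ∈ Finset.univ.erase k, centroid cls (x s) l (y l))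
      = u y * ∏ k, centroid cls (x r) k (y k)
        + ∫ s in Ioc r t, u y * ∑ k, centroid cls (g s) k (y k)
            * ∏ l ∈ Finset.univ.erase k, centroid cls (x s) l (y l) := by
    intro y
    rw [MeasureTheory.integral_const_mul]
    ring
  simp_rw [expand]
  rw [Finset.sum_add_distrib]
  have h1 : (∑ y : ι → A, u y * ∏ k, centroid cls (x r) k (y k)) = U u (centroid cls (x r)) := rfl
  rw [h1]
  congr 1
  rw [← MeasureTheory.integral_finset_sum _ fun y _ => ((main y).2.const_mul (u y))]
  refine setIntegral_congr_fun measurableSet_Ioc fun s _ => ?_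
  -- algebra: ∑_y u y * ∑_k ... = ∑_k U(update ...)
  have : ∀ i, U u (Function.update (centroid cls (x s)) i (centroid cls (g s) i))
      = ∑ y : ι → A, u y * (centroid cls (g s) i (y i)
          * ∏ l ∈ Finset.univ.erase i, centroid cls (x s) l (y l)) :=
    fun i => U_update_eq _ i _
  simp_rw [this]
  rw [Finset.sum_comm]
  refine Finset.sum_congr rfl fun y _ => ?_
  rw [Finset.mul_sum]

end Main1
section Main2
open MeasureTheory Set Function Filter Topology

variable {Y : ι → Finset A} {u : (ι → A) → ℝ} {cls : ι → κ}

lemma sum_U_update_eq (p w : ι → A → ℝ) :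
    ∑ i, U u (Function.update p i (w i))
      = ∑ y : ι → A, u y * ∑ k, w k (y k) * ∏ l ∈ Finset.univ.erase k, p l (y l) := by
  have h : ∀ i, U u (Function.update p i (w i))
      = ∑ y : ι → A, u y * (w i (y i) * ∏ l ∈ Finset.univ.erase i, p l (y l)) :=
    fun i => U_update_eq _ i _
  simp_rw [h]
  rw [Finset.sum_comm]
  refine Finset.sum_congr rfl fun y _ => ?_
  rw [Finset.mul_sum]

variable {x g : ℝ → ι → A → ℝ}

lemma D_integrableOn (hg : LocallyIntegrableOn g (Ici (0:ℝ)) volume)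
    (hrep : ∀ t : ℝ, 0 ≤ t → x t = x 0 + ∫ s in Ioc (0:ℝ) t, g s)
    {r t : ℝ} (hr : 0 ≤ r) (hrt : r ≤ t) :
    IntegrableOn (fun s => ∑ i, U u (Function.update (centroid cls (x s)) i
      (centroid cls (g s) i))) (Ioc r t) := by
  classical
  have main : ∀ y : ι → A, IntegrableOn (fun s => ∑ k, centroid cls (g s) k (y k)
      * ∏ l ∈ Finset.univ.erase k, centroid cls (x s) l (y l)) (Ioc r t) := by
    intro y
    set c : ι → ℝ := fun k => centroid cls (x r) k (y k) with hc
    set G : ι → ℝ → ℝ := fun k s => centroid cls (g s) k (y k) with hG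
    have hGint : ∀ k ∈ Finset.univ, IntegrableOn (G k) (Ioc r t) :=
      fun k _ => centroid_g_coord_integrableOn hg hr k (y k)
    obtain ⟨_, H2⟩ := prod_primitive_finset c G Finset.univ hGint
    have hcoord : ∀ s, r ≤ s → ∀ k, c k + ∫ v in Ioc r s, G k v = centroid cls (x s) k (y k) :=
      fun s hs k => (centroid_coord_rep hg hrep hr hs k (y k)).symm
    refine H2.congr_fun ?_ measurableSet_Ioc
    intro s hs
    simp only
    refine Finset.sum_congr rfl fun k _ => ?_
    congr 1
    exact Finset.prod_congr rfl fun l _ => hcoord s hs.1.le l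
  have e : (fun s => ∑ i, U u (Function.update (centroid cls (x s)) i (centroid cls (g s) i)))
      = fun s => ∑ y : ι → A, u y * ∑ k, centroid cls (g s) k (y k)
          * ∏ l ∈ Finset.univ.erase k, centroid cls (x s) l (y l) :=
    funext fun s => sum_U_update_eq _ _
  rw [e]
  exact integrable_finset_sum _ fun y _ => (main y).const_mul (u y)

lemma continuous_U : Continuous fun p : ι → A → ℝ => U u p := by
  unfold U
  refine continuous_finset_sum _ fun y _ => Continuous.mul continuous_const ?_
  exact continuous_finset_prod _ fun i _ =>
    (continuous_apply (y i)).comp (continuous_apply i)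

lemma continuous_centroid : Continuous fun p : ι → A → ℝ => centroid cls p := by
  refine continuous_pi fun i => ?_
  unfold centroid
  exact (continuous_finset_sum _ fun j _ => (continuous_apply j : Continuous fun p : ι → A → ℝ => p j)).const_smul (((cluster cls i).card : ℝ)⁻¹)

lemma continuous_update_comp {i : ι} {F : (ι → A → ℝ) → ι → A → ℝ}
    {v : (ι → A → ℝ) → A → ℝ} (hF : Continuous F) (hv : Continuous v) :
    Continuous fun p => Function.update (F p) i (v p) := by
  refine continuous_pi fun k => ?_
  by_cases hk : k = i
  · subst hk
    have : (fun p => Function.update (F p) k (v p) k) = v := by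
      funext p; rw [Function.update_self]
    rw [this]
    exact hv
  · have : (fun p => Function.update (F p) i (v p) k) = fun p => F p k := by
      funext p; rw [Function.update_of_ne hk]
    rw [this]
    exact (continuous_apply k).comp hF

lemma isClosed_K : IsClosed {p : ι → A → ℝ | ∀ i, ∀ qi ∈ simplex (Y i),
    U u (Function.update (centroid cls p) i qi)
      ≤ U u (Function.update (centroid cls p) i (p i))} := by
  have e : {p : ι → A → ℝ | ∀ i, ∀ qi ∈ simplex (Y i),
      U u (Function.update (centroid cls p) i qi)
        ≤ U u (Function.update (centroid cls p) i (p i))}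
      = ⋂ i, ⋂ qi ∈ simplex (Y i), {p : ι → A → ℝ |
          U u (Function.update (centroid cls p) i qi)
            ≤ U u (Function.update (centroid cls p) i (p i))} := by
    ext p; simp [Set.mem_iInter]
  rw [e]
  refine isClosed_iInter fun i => isClosed_iInter fun qi => isClosed_iInter fun _ => ?_
  refine isClosed_le ?_ ?_
  · exact continuous_U.comp (continuous_update_comp continuous_centroid continuous_const)
  · exact continuous_U.comp (continuous_update_comp continuous_centroid (continuous_apply i))

lemma x_continuousOn (hg : LocallyIntegrableOn g (Ici (0:ℝ)) volume)
    (hrep : ∀ t : ℝ, 0 ≤ t → x t = x 0 + ∫ s in Ioc (0:ℝ) t, g s) (R : ℝ) :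
    ContinuousOn x (Icc (0:ℝ) R) := by
  have hint : IntegrableOn g (Icc (0:ℝ) R) :=
    hg.integrableOn_compact_subset Icc_subset_Ici_self isCompact_Icc
  have hcont : ContinuousOn (fun t => x 0 + ∫ s in Ioc (0:ℝ) t, g s) (Icc (0:ℝ) R) :=
    continuous_const.continuousOn.add (intervalIntegral.continuousOn_primitive hint)
  exact hcont.congr fun t ht => hrep t ht.1

end Main2
open Set Function Filter Topology in
/-- Along any solution of the joint CT-ECFP inclusion, and for any nondegenerate interval
`T ⊆ [0,∞)`, `v(t) = (1/n) ∑ᵢ U(q^c_i(t), q̄^c_{-i}(t))` is constant on `T` iff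
`q^c(t) ∈ MCE` for every `t ∈ T`. -/
theorem V_constant_iff_MCE
    (Y : ι → Finset A) (hY : ∀ i, (Y i).Nonempty) (u : (ι → A) → ℝ)
    (cls : ι → κ) (hpi : PermInvariant Y u cls)
    (x : ℝ → ι → A → ℝ) (hx : IsSolution Y (Fjoint Y u cls) x)
    (T : Set ℝ) (hT : T ⊆ Set.Ici 0) (hTc : T.OrdConnected)
    (hTnd : ∃ s ∈ T, ∃ t ∈ T, s < t) :
    (∀ s ∈ T, ∀ t ∈ T, Vfun u cls (x s) = Vfun u cls (x t)) ↔
      (∀ t ∈ T, x t ∈ MCE Y u cls) := by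
  classical
  obtain ⟨hDelta, g, hgint, hgF, hrep⟩ := hx
  set Dt : ℝ → ℝ := fun s => ∑ i, U u (Function.update (centroid cls (x s)) i
    (centroid cls (g s) i)) with hDt
  -- a.e. identification of the derivative with the deficiency Dfun
  have hae : ∀ᵐ s ∂(MeasureTheory.volume.restrict (Set.Ici (0:ℝ))),
      Dt s = Dfun u cls hY (x s) := by
    filter_upwards [hgF, MeasureTheory.ae_restrict_mem measurableSet_Ici] with s hgs hs
    obtain ⟨b, hb, hbg⟩ := hgs
    have hxs : x s ∈ Delta Y := hDelta s hs
    set c := centroid cls (x s) with hc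
    have hgsub : g s = b - x s := hbg.symm
    have hcent : centroid cls (g s) = centroid cls b - centroid cls (x s) := by
      rw [hgsub]; exact centroid_sub b (x s)
    calc Dt s = ∑ i, (U u (Function.update c i (centroid cls b i))
          - U u (Function.update c i (c i))) := by
          refine Finset.sum_congr rfl fun i _ => ?_
          rw [hcent]
          have : (centroid cls b - centroid cls (x s)) i
              = centroid cls b i - centroid cls (x s) i := rfl
          rw [this, U_update_sub]
      _ = (∑ i, U u (Function.update c i (centroid cls b i)))
          - ∑ i, U u (Function.update c i (c i)) := Finset.sum_sub_distrib _ _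
      _ = (∑ j, U u (Function.update c j (b j)))
          - ∑ j, U u (Function.update c j (x s j)) := by
          congr 1
          · exact sum_U_centroid hpi hxs b (fun k a ha => (hb k).1.2.1 a ha)
          · have h1 : ∀ i : ι, Function.update c i (c i) = c :=
              fun i => Function.update_eq_self i c
            simp_rw [h1]
            rw [Finset.sum_const, Finset.card_univ, nsmul_eq_mul, ← sum_U_self hpi hxs]
      _ = Dfun u cls hY (x s) := by
          unfold Dfun
          rw [Finset.sum_sub_distrib]
          congr 1
          exact Finset.sum_congr rfl fun j _ => U_update_BR hY hb j
  -- FTC with the deficiency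
  have key : ∀ r t : ℝ, 0 ≤ r → r ≤ t →
      (U u (centroid cls (x t)) = U u (centroid cls (x r))
        + ∫ s in Set.Ioc r t, Dfun u cls hY (x s))
      ∧ MeasureTheory.IntegrableOn (fun s => Dfun u cls hY (x s)) (Set.Ioc r t) := by
    intro r t hr hrt
    have hft := V_FTC (u := u) (cls := cls) hgint hrep hr hrt
    have hDint : MeasureTheory.IntegrableOn Dt (Set.Ioc r t) :=
      D_integrableOn hgint hrep hr hrt
    have hsub : Set.Ioc r t ⊆ Set.Ici (0:ℝ) := fun s hs => hr.trans hs.1.le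
    have haes : Dt =ᵐ[MeasureTheory.volume.restrict (Set.Ioc r t)]
        fun s => Dfun u cls hY (x s) :=
      MeasureTheory.ae_restrict_of_ae_restrict_of_subset hsub hae
    constructor
    · rw [hft]
      congr 1
      exact MeasureTheory.integral_congr_ae haes
    · exact hDint.congr haes
  have hV : ∀ t ∈ T, Vfun u cls (x t) = U u (centroid cls (x t)) :=
    fun t ht => Vfun_eq hpi (hDelta t (hT ht))
  constructor
  · -- constant ⇒ MCE everywhere on T
    intro hconst t0 ht0
    obtain ⟨s1, hs1, t1, ht1, hlt⟩ := hTnd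
    obtain ⟨c, d, hcd, hcT, hdT, ht0cd⟩ :
        ∃ c d : ℝ, c < d ∧ c ∈ T ∧ d ∈ T ∧ t0 ∈ Set.Icc c d := by
      rcases lt_or_ge t0 t1 with h | h
      · exact ⟨t0, t1, h, ht0, ht1, le_rfl, h.le⟩
      · exact ⟨s1, t0, lt_of_lt_of_le hlt h, hs1, ht0, (hlt.le.trans h), le_rfl⟩
    have hc0 : 0 ≤ c := hT hcT
    have hkey := key c d hc0 hcd.le
    have hint0 : ∫ s in Set.Ioc c d, Dfun u cls hY (x s) = 0 := by
      have hcd' := hconst c hcT d hdT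
      rw [hV c hcT, hV d hdT] at hcd'
      linarith [hkey.1]
    have hnonneg : (0 : ℝ → ℝ) ≤ᵐ[MeasureTheory.volume.restrict (Set.Ioc c d)]
        fun s => Dfun u cls hY (x s) := by
      refine (MeasureTheory.ae_restrict_mem measurableSet_Ioc).mono fun s hs => ?_
      exact Dfun_nonneg hY (hDelta s (hc0.trans hs.1.le))
    have hzero : ∀ᵐ s ∂(MeasureTheory.volume.restrict (Set.Ioc c d)),
        Dfun u cls hY (x s) = 0 := by
      have := (MeasureTheory.integral_eq_zero_iff_of_nonneg_ae hnonneg hkey.2).1 hint0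
      filter_upwards [this] with s hs using hs
    have hnull : MeasureTheory.volume
        ({s : ℝ | ¬ Dfun u cls hY (x s) = 0} ∩ Set.Ioc c d) = 0 := by
      have h' := hzero
      rw [MeasureTheory.ae_iff] at h'
      rwa [MeasureTheory.Measure.restrict_apply' measurableSet_Ioc] at h'
    have hfreq : ∃ᶠ s in 𝓝[Set.Ioo c d] t0, x s ∈ MCE Y u cls := by
      by_contra hcon
      rw [Filter.not_frequently] at hcon
      rw [eventually_nhdsWithin_iff] at hcon
      obtain ⟨ε, hε, hball⟩ := Metric.eventually_nhds_iff.1 hcon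
      have hWopen : IsOpen (Metric.ball t0 ε ∩ Set.Ioo c d) :=
        Metric.isOpen_ball.inter isOpen_Ioo
      have hWne : (Metric.ball t0 ε ∩ Set.Ioo c d).Nonempty := by
        have ht0cl : t0 ∈ closure (Set.Ioo c d) := by
          rw [closure_Ioo hcd.ne]; exact ht0cd
        exact mem_closure_iff.1 ht0cl (Metric.ball t0 ε) Metric.isOpen_ball
          (Metric.mem_ball_self hε)
      have hpos : 0 < MeasureTheory.volume (Metric.ball t0 ε ∩ Set.Ioo c d) :=
        hWopen.measure_pos MeasureTheory.volume hWne
      refine hpos.ne' (MeasureTheory.measure_mono_null ?_ hnull)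
      intro s hs
      have hsIoo : s ∈ Set.Ioo c d := hs.2
      have hnotmce : ¬ x s ∈ MCE Y u cls := hball hs.1 hsIoo
      refine ⟨fun h0 => hnotmce ?_, Set.Ioo_subset_Ioc_self hsIoo⟩
      exact (Dfun_eq_zero_iff hY (hDelta s (hc0.trans hsIoo.1.le))).1 h0
    have htd : Tendsto x (𝓝[Set.Ioo c d] t0) (𝓝 (x t0)) := by
      have h1 : ContinuousWithinAt x (Set.Icc (0:ℝ) d) t0 :=
        x_continuousOn hgint hrep d t0 ⟨hc0.trans ht0cd.1, ht0cd.2⟩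
      exact h1.tendsto.mono_left (nhdsWithin_mono t0
        (fun s hs => ⟨hc0.trans hs.1.le, hs.2.le⟩))
    have hfreqK : ∃ᶠ s in 𝓝[Set.Ioo c d] t0, x s ∈ {p : ι → A → ℝ | ∀ i,
        ∀ qi ∈ simplex (Y i), U u (Function.update (centroid cls p) i qi)
          ≤ U u (Function.update (centroid cls p) i (p i))} :=
      hfreq.mono fun s hs => hs.2
    have hmemK := (isClosed_K (Y := Y) (u := u) (cls := cls)).mem_of_frequently_of_tendsto
      hfreqK htd
    exact ⟨hDelta t0 (hT ht0), hmemK⟩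
  · -- MCE everywhere on T ⇒ constant
    intro hmce
    have main2 : ∀ s ∈ T, ∀ t ∈ T, s ≤ t → Vfun u cls (x s) = Vfun u cls (x t) := by
      intro s hsT t htT hst
      have hs0 : 0 ≤ s := hT hsT
      have hkey := key s t hs0 hst
      have hzero : ∫ v in Set.Ioc s t, Dfun u cls hY (x v) = 0 := by
        have hz : ∀ v ∈ Set.Ioc s t, Dfun u cls hY (x v) = (0 : ℝ) := by
          intro v hv
          have hvT : v ∈ T := hTc.out hsT htT ⟨hv.1.le, hv.2⟩
          exact (Dfun_eq_zero_iff hY (hDelta v (hT hvT))).2 (hmce v hvT)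
        rw [MeasureTheory.setIntegral_congr_fun measurableSet_Ioc hz]
        simp
      rw [hV s hsT, hV t htT, hkey.1, hzero, add_zero]
    intro s hsT t htT
    rcases le_total s t with hst | hst
    · exact main2 s hsT t htT hst
    · exact (main2 t htT s hsT hst).symm

end ECFP
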